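/- arXiv:2409.18404 — 7 statements merged into one kernel-verified Lean document; each statement's English description precedes it below -/
import Mathlib

section
/- Let p be a prime number and let k and N be positive integers. If n and m are integers with n ≥ N, m ≥ N, and n ≡ m (mod φ(p^N)), where φ denotes Euler's totient function, then B_n^{(-k)} ≡ B_m^{(-k)} (mod p^N). -/
/-- Stirling numbers of the second kind. -/
def stirling2 : ℕ → ℕ → ℕ
  | 0, 0 => 1
  | 0, _ + 1 => 0
  | _ + 1, 0 => 0
  | n + 1, m + 1 => (m + 1) * stirling2 n (m + 1) + stirling2 n m

/-- The poly-Bernoulli number `B_n^{(-k)}` with negative upper index `-k`. -/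
def polyBernoulliB (k n : ℕ) : ℤ :=
  (-1 : ℤ) ^ n * ∑ m ∈ Finset.range (n + 1),
    (-1 : ℤ) ^ m * (m.factorial : ℤ) * (stirling2 n m : ℤ) * ((m : ℤ) + 1) ^ k

/-- The poly-Bernoulli number of type C, `C_n^{(-k)}`, with negative upper index `-k`. -/
def polyBernoulliC (k n : ℕ) : ℤ :=
  (-1 : ℤ) ^ n * ∑ m ∈ Finset.range (n + 1),
    (-1 : ℤ) ^ m * (m.factorial : ℤ) * (stirling2 (n + 1) (m + 1) : ℤ) * ((m : ℤ) + 1) ^ k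


/-!
Expanding `(m + 1) ^ k` in the binomial basis `m.choose j` and summing against the signed
Stirling numbers `(-1) ^ m * m ! * S(n, m)` gives Kaneko's symmetric formula
`B_n^{(-k)} = ∑ j, (j !) ^ 2 * S(n + 1, j + 1) * S(k + 1, j + 1)`, hence the duality
`B_n^{(-k)} = B_k^{(-n)}`. Read through the duality, the defining sum exhibits `B_n^{(-k)}` as an
integer combination of the powers `(j + 1) ^ n`, `j ≤ k`. Modulo `p ^ N` such a power is periodic
in `n ≥ N` with period `φ (p ^ N)`: by Euler's theorem when `p ∤ j + 1`, and because it vanishes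
otherwise.
-/

open Finset Nat

theorem stirling2_eq_stirlingSecond : stirling2 = stirlingSecond := by
  funext n m
  induction n generalizing m with
  | zero => cases m <;> rfl
  | succ n ih => cases m <;> simp [stirling2, stirlingSecond_succ_succ, ih]

theorem add_one_pow_eq_sum_stirlingSecond_mul_choose (k m : ℕ) :
    (m + 1) ^ k = ∑ j ∈ range (k + 1), stirlingSecond (k + 1) (j + 1) * j ! * m.choose j := by
  induction k with
  | zero => simp [stirlingSecond_self]
  | succ k ih =>
    calc (m + 1) ^ (k + 1)
        = ∑ j ∈ range (k + 1),
            stirlingSecond (k + 1) (j + 1) * (j + 1)! * (m + 1).choose (j + 1) := by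
          rw [pow_succ, ih, sum_mul]
          refine sum_congr rfl fun j _ => ?_
          rw [mul_assoc, mul_comm (m.choose j), Nat.add_one_mul_choose_eq, factorial_succ]
          ring
      _ = ∑ j ∈ range (k + 1), stirlingSecond (k + 1) (j + 1) * (j + 1)! * m.choose j
          + ∑ j ∈ range (k + 1), stirlingSecond (k + 1) (j + 1) * (j + 1)! * m.choose (j + 1) := by
          simp only [choose_succ_succ', mul_add, sum_add_distrib]
      _ = ∑ j ∈ range (k + 2), stirlingSecond (k + 1) (j + 1) * (j + 1)! * m.choose j
          + ∑ j ∈ range (k + 2), stirlingSecond (k + 1) j * j ! * m.choose j := by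
          rw [sum_range_succ _ (k + 1), sum_range_succ' _ (k + 1),
            stirlingSecond_eq_zero_of_lt (by omega : k + 1 < k + 1 + 1)]
          simp
      _ = ∑ j ∈ range (k + 2), stirlingSecond (k + 2) (j + 1) * j ! * m.choose j := by
          rw [← sum_add_distrib]
          refine sum_congr rfl fun j _ => ?_
          rw [stirlingSecond_succ_succ (k + 1) j, factorial_succ j]
          ring

theorem mul_choose_succ_sub_add_one_mul_choose_succ (m j : ℕ) :
    (m : ℤ) * m.choose (j + 1) - (m + 1) * (m + 1).choose (j + 1)
      = -((j : ℤ) + 2) * m.choose (j + 1) - (j + 1) * m.choose j := by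
  have h := congrArg (Nat.cast : ℕ → ℤ) (Nat.add_one_mul_choose_eq m j)
  rw [choose_succ_succ'] at h ⊢
  push_cast at h ⊢
  linear_combination -h

/-- The recurrence of `S(n + 1, ·)`, transposed onto the test sequence `c`. -/
theorem sum_signed_stirlingSecond_succ_mul (n : ℕ) (c : ℕ → ℤ) :
    ∑ m ∈ range (n + 2), (-1 : ℤ) ^ m * m ! * stirlingSecond (n + 1) m * c m
      = ∑ m ∈ range (n + 1),
          (-1 : ℤ) ^ m * m ! * stirlingSecond n m * (m * c m - (m + 1) * c (m + 1)) := by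
  have split (m : ℕ) : (-1 : ℤ) ^ (m + 1) * (m + 1)! * stirlingSecond (n + 1) (m + 1) * c (m + 1)
      = (-1 : ℤ) ^ (m + 1) * (m + 1)! * ((m + 1) * stirlingSecond n (m + 1)) * c (m + 1)
        + (-1 : ℤ) ^ (m + 1) * (m + 1)! * stirlingSecond n m * c (m + 1) := by
    rw [stirlingSecond_succ_succ]
    push_cast
    ring
  have shift : ∑ m ∈ range (n + 1),
      (-1 : ℤ) ^ (m + 1) * (m + 1)! * ((m + 1) * stirlingSecond n (m + 1)) * c (m + 1)
        = ∑ m ∈ range (n + 1), (-1 : ℤ) ^ m * m ! * stirlingSecond n m * (m * c m) := by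
    have := sum_range_succ' (fun m => (-1 : ℤ) ^ m * m ! * stirlingSecond n m * (m * c m)) (n + 1)
    rw [sum_range_succ, stirlingSecond_eq_zero_of_lt (lt_add_one n)] at this
    simp only [Nat.cast_zero, mul_zero, zero_mul, add_zero, Nat.cast_succ] at this
    rw [this]
    exact sum_congr rfl fun m _ => by ring
  rw [sum_range_succ', stirlingSecond_succ_zero, Nat.cast_zero, mul_zero, zero_mul, add_zero,
    sum_congr rfl fun m _ => split m, sum_add_distrib, shift, ← sum_add_distrib]
  exact sum_congr rfl fun m _ => by push_cast [factorial_succ]; ring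

theorem sum_signed_stirlingSecond_mul_choose (n j : ℕ) :
    ∑ m ∈ range (n + 1), (-1 : ℤ) ^ m * m ! * stirlingSecond n m * m.choose j
      = (-1) ^ n * j ! * stirlingSecond (n + 1) (j + 1) := by
  induction n generalizing j with
  | zero => cases j <;> simp [stirlingSecond_self, stirlingSecond_eq_zero_of_lt]
  | succ n ih =>
    rw [sum_signed_stirlingSecond_succ_mul]
    cases j with
    | zero =>
      simp only [choose_zero_right, Nat.cast_one, mul_one, sub_add_cancel_left, mul_neg,
        sum_neg_distrib]
      have ih0 := ih 0
      simp only [choose_zero_right, Nat.cast_one, mul_one] at ih0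
      rw [ih0]
      simp [stirlingSecond_one_right, pow_succ]
    | succ j =>
      have hterm (m : ℕ) : (-1 : ℤ) ^ m * m ! * stirlingSecond n m
            * (m * m.choose (j + 1) - (m + 1) * (m + 1).choose (j + 1))
          = -((j : ℤ) + 2) * ((-1) ^ m * m ! * stirlingSecond n m * m.choose (j + 1))
            - (j + 1) * ((-1) ^ m * m ! * stirlingSecond n m * m.choose j) := by
        rw [mul_choose_succ_sub_add_one_mul_choose_succ]
        ring
      rw [sum_congr rfl fun m _ => hterm m, sum_sub_distrib, ← mul_sum, ← mul_sum, ih, ih,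
        stirlingSecond_succ_succ (n + 1) (j + 1), factorial_succ]
      push_cast
      ring

theorem polyBernoulliB_eq_sum_factorial_sq_mul_stirlingSecond (k n : ℕ) :
    polyBernoulliB k n = ∑ j ∈ range (k + 1),
      (j ! : ℤ) ^ 2 * stirlingSecond (n + 1) (j + 1) * stirlingSecond (k + 1) (j + 1) := by
  have expand (m : ℕ) : ((m : ℤ) + 1) ^ k
      = ∑ j ∈ range (k + 1), (stirlingSecond (k + 1) (j + 1) * j ! : ℤ) * m.choose j := by
    exact_mod_cast add_one_pow_eq_sum_stirlingSecond_mul_choose k m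
  calc polyBernoulliB k n
      = (-1) ^ n * ∑ j ∈ range (k + 1), (stirlingSecond (k + 1) (j + 1) * j ! : ℤ)
          * ∑ m ∈ range (n + 1), (-1 : ℤ) ^ m * m ! * stirlingSecond n m * m.choose j := by
        simp only [polyBernoulliB, stirling2_eq_stirlingSecond, expand, mul_sum]
        rw [sum_comm]
        exact sum_congr rfl fun j _ => sum_congr rfl fun m _ => by ring
    _ = _ := by
        have hsq : (-1 : ℤ) ^ n * (-1) ^ n = 1 := by rw [← mul_pow]; norm_num
        simp only [sum_signed_stirlingSecond_mul_choose, mul_sum]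
        refine sum_congr rfl fun j _ => ?_
        linear_combination ((j ! : ℤ) ^ 2 * stirlingSecond (n + 1) (j + 1)
          * stirlingSecond (k + 1) (j + 1)) * hsq

theorem polyBernoulliB_comm (k n : ℕ) : polyBernoulliB k n = polyBernoulliB n k := by
  have extend (a b : ℕ) : polyBernoulliB a b = ∑ j ∈ range (a + b + 1),
      (j ! : ℤ) ^ 2 * stirlingSecond (b + 1) (j + 1) * stirlingSecond (a + 1) (j + 1) := by
    rw [polyBernoulliB_eq_sum_factorial_sq_mul_stirlingSecond]
    refine sum_subset (range_subset_range.mpr (by omega)) fun j _ hj => ?_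
    rw [stirlingSecond_eq_zero_of_lt (by simp at hj; omega : a + 1 < j + 1)]
    simp
  rw [extend, extend, add_comm n k]
  exact sum_congr rfl fun j _ => by ring

theorem ZMod.pow_eq_pow_of_modEq_totient {p N n m : ℕ} (hp : p.Prime) (a : ZMod (p ^ N))
    (hn : N ≤ n) (hm : N ≤ m) (h : n ≡ m [MOD φ (p ^ N)]) : a ^ n = a ^ m := by
  have : NeZero (p ^ N) := ⟨pow_ne_zero N hp.ne_zero⟩
  by_cases ha : IsUnit a
  · obtain ⟨u, rfl⟩ := ha
    rw [← Units.val_pow_eq_pow_val, ← Units.val_pow_eq_pow_val, pow_eq_pow_iff_modEq.mpr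
      (h.of_dvd (orderOf_dvd_of_pow_eq_one (ZMod.pow_totient u)))]
  · obtain ⟨b, hb⟩ : p ∣ a.val := by
      rw [← ZMod.natCast_zmod_val a, ZMod.isUnit_iff_coprime] at ha
      exact hp.dvd_iff_not_coprime.mpr fun hcop => ha (Nat.Coprime.pow_right N hcop.symm)
    have ha_pow : a ^ N = 0 := by
      rw [← ZMod.natCast_zmod_val a, hb, Nat.cast_mul, mul_pow, ← Nat.cast_pow,
        ZMod.natCast_self, zero_mul]
    rw [pow_eq_zero_of_le hn ha_pow, pow_eq_zero_of_le hm ha_pow]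

theorem polyBernoulliB_period_prime_pow_general (p : ℕ) (hp : p.Prime) (k N : ℕ)
    (n m : ℕ) (hn : N ≤ n) (hm : N ≤ m)
    (hnm : n ≡ m [MOD (p ^ N).totient]) :
    polyBernoulliB k n ≡ polyBernoulliB k m [ZMOD ((p : ℤ) ^ N)] := by
  rw [polyBernoulliB_comm k n, polyBernoulliB_comm k m, ← Nat.cast_pow,
    ← ZMod.intCast_eq_intCast_iff]
  simp only [polyBernoulliB, Int.cast_mul, Int.cast_pow, Int.cast_sum]
  congr! 3 with j
  exact ZMod.pow_eq_pow_of_modEq_totient hp _ hn hm hnm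

theorem polyBernoulliB_period_prime_pow (p : ℕ) (hp : p.Prime) (k N : ℕ)
    (hk : 0 < k) (hN : 0 < N) (n m : ℕ) (hn : N ≤ n) (hm : N ≤ m)
    (hnm : n ≡ m [MOD (p ^ N).totient]) :
    polyBernoulliB k n ≡ polyBernoulliB k m [ZMOD ((p : ℤ) ^ N)] :=
  polyBernoulliB_period_prime_pow_general p hp k N n m hn hm hnm
end

section
/- Let k and M be positive integers, and let M = p_1^{e_1} p_2^{e_2} ⋯ p_l^{e_l} be the prime factorization of M into distinct primes p_1, …, p_l. For any integers n, m ≥ max{e_j : 1 ≤ j ≤ l} satisfying n ≡ m (mod φ(M)), the numbers of lonesum matrices satisfy L(k, n) ≡ L(k, m) (mod M). -/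
/-- The row sum vector of a `{0,1}`-matrix (entries modeled by `Bool`). -/
def rowSum {k n : ℕ} (A : Matrix (Fin k) (Fin n) Bool) (i : Fin k) : ℕ :=
  ∑ j, if A i j then 1 else 0

/-- The column sum vector of a `{0,1}`-matrix. -/
def colSum {k n : ℕ} (A : Matrix (Fin k) (Fin n) Bool) (j : Fin n) : ℕ :=
  ∑ i, if A i j then 1 else 0

/-- A `{0,1}`-matrix is lonesum if it is the unique `{0,1}`-matrix having its
row sum vector and its column sum vector. -/
def IsLonesum {k n : ℕ} (A : Matrix (Fin k) (Fin n) Bool) : Prop :=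
  ∀ B : Matrix (Fin k) (Fin n) Bool,
    (∀ i, rowSum B i = rowSum A i) → (∀ j, colSum B j = colSum A j) → B = A

/-- `lonesumCount k n` is the number `L(k, n)` of lonesum matrices of size `k × n`. -/
noncomputable def lonesumCount (k n : ℕ) : ℕ :=
  Nat.card {A : Matrix (Fin k) (Fin n) Bool // IsLonesum A}

/-- the set of rows where column j has a 1 -/
def colSet {k n : ℕ} (A : Matrix (Fin k) (Fin n) Bool) (j : Fin n) : Finset (Fin k) :=
  Finset.univ.filter (fun i => A i j = true)

def rowSet {k n : ℕ} (A : Matrix (Fin k) (Fin n) Bool) (i : Fin k) : Finset (Fin n) :=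
  Finset.univ.filter (fun j => A i j = true)

lemma rowSum_eq_card {k n : ℕ} (A : Matrix (Fin k) (Fin n) Bool) (i : Fin k) :
    rowSum A i = (rowSet A i).card := by
  simp [rowSum, rowSet, Finset.sum_boole]

lemma colSum_eq_card {k n : ℕ} (A : Matrix (Fin k) (Fin n) Bool) (j : Fin n) :
    colSum A j = (colSet A j).card := by
  simp [colSum, colSet, Finset.sum_boole]

lemma sum_swap_pair {α : Type*} [Fintype α] [DecidableEq α] (f g : α → ℕ) (x y : α)
    (hxy : x ≠ y) (h : ∀ z, z ≠ x → z ≠ y → f z = g z) (hsum : f x + f y = g x + g y) :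
    ∑ z, f z = ∑ z, g z := by
  have hx : x ∈ (Finset.univ : Finset α) := Finset.mem_univ x
  have hy : y ∈ Finset.univ.erase x := Finset.mem_erase.2 ⟨Ne.symm hxy, Finset.mem_univ y⟩
  rw [← Finset.sum_erase_add _ f hx, ← Finset.sum_erase_add _ f hy,
      ← Finset.sum_erase_add _ g hx, ← Finset.sum_erase_add _ g hy]
  have : ∑ z ∈ (Finset.univ.erase x).erase y, f z = ∑ z ∈ (Finset.univ.erase x).erase y, g z := by
    apply Finset.sum_congr rfl
    intro z hz
    simp only [Finset.mem_erase] at hz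
    exact h z hz.2.1 hz.1
  omega

def ChainCond {k n : ℕ} (A : Matrix (Fin k) (Fin n) Bool) : Prop :=
  ∀ j j', colSet A j ⊆ colSet A j' ∨ colSet A j' ⊆ colSet A j

/-- not a chain implies not lonesum -/
lemma not_lonesum_of_not_chain {k n : ℕ} (A : Matrix (Fin k) (Fin n) Bool)
    (h : ¬ ChainCond A) : ¬ IsLonesum A := by
  unfold ChainCond at h
  push_neg at h
  obtain ⟨j, j', h1, h2⟩ := h
  rw [Finset.not_subset] at h1 h2
  obtain ⟨i', hi'1, hi'2⟩ := h1
  obtain ⟨i, hi1, hi2⟩ := h2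
  simp only [colSet, Finset.mem_filter, Finset.mem_univ, true_and] at hi1 hi2 hi'1 hi'2
  have hjj' : j ≠ j' := by rintro rfl; exact hi2 hi1
  have hii' : i ≠ i' := by rintro rfl; exact hi2 hi'1
  -- B : swapped matrix
  set B : Matrix (Fin k) (Fin n) Bool := fun a b =>
    if a = i ∧ b = j then true else if a = i ∧ b = j' then false
    else if a = i' ∧ b = j then false else if a = i' ∧ b = j' then true else A a b with hB
  intro hl
  have hrow : ∀ a, rowSum B a = rowSum A a := by
    intro a
    by_cases ha : a = i
    · subst ha
      refine sum_swap_pair _ _ j' j (Ne.symm hjj') (fun z hz1 hz2 => ?_) ?_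
      · simp [hB, hz1, hz2, hii']
      · simp [hB, hjj', hii', Ne.symm hjj', Ne.symm hii', hi1, hi2]
    by_cases ha' : a = i'
    · subst ha'
      refine sum_swap_pair _ _ j' j (Ne.symm hjj') (fun z hz1 hz2 => ?_) ?_
      · simp [hB, hz1, hz2, ha]
      · simp [hB, hjj', Ne.symm hjj', ha, hi'1, hi'2]
    · apply Finset.sum_congr rfl
      intro z _
      simp [hB, ha, ha']
  have hcol : ∀ b, colSum B b = colSum A b := by
    intro b
    by_cases hb : b = j
    · subst hb
      refine sum_swap_pair _ _ i' i (Ne.symm hii') (fun z hz1 hz2 => ?_) ?_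
      · simp [hB, hz1, hz2]
      · simp [hB, hii', Ne.symm hii', hi2, hi'1]
    by_cases hb' : b = j'
    · subst hb'
      refine sum_swap_pair _ _ i' i (Ne.symm hii') (fun z hz1 hz2 => ?_) ?_
      · simp [hB, hz1, hz2, hb]
      · simp [hB, hii', Ne.symm hii', hb, hi1, hi'2]
    · apply Finset.sum_congr rfl
      intro z _
      simp [hB, hb, hb']
  have heq := hl B hrow hcol
  have hBij : B i j = true := by simp [hB]
  rw [heq] at hBij
  exact hi2 hBij

-- actual part 2
lemma double_count {k n : ℕ} (X : Matrix (Fin k) (Fin n) Bool) :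
    ∑ i, (rowSet X i).offDiag.card
      = ∑ p ∈ (Finset.univ : Finset (Fin n)).offDiag, (colSet X p.1 ∩ colSet X p.2).card := by
  have lhs : ∀ i, (rowSet X i).offDiag.card
      = ∑ p ∈ (Finset.univ : Finset (Fin n)).offDiag,
          (if X i p.1 = true ∧ X i p.2 = true then 1 else 0) := by
    intro i
    rw [Finset.sum_boole]
    congr 1
    ext p
    simp only [Finset.mem_offDiag, Finset.mem_filter, Finset.mem_univ, true_and, rowSet]
    tauto
  have rhs : ∀ p : Fin n × Fin n, (colSet X p.1 ∩ colSet X p.2).card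
      = ∑ i, (if X i p.1 = true ∧ X i p.2 = true then 1 else 0) := by
    intro p
    rw [Finset.sum_boole]
    congr 1
    ext i
    simp [colSet]
  simp only [lhs]
  rw [Finset.sum_comm]
  exact Finset.sum_congr rfl (fun p _ => (rhs p).symm)

/-- the membership formula for chain matrices -/
lemma chain_formula {k n : ℕ} (X : Matrix (Fin k) (Fin n) Bool) (hX : ChainCond X)
    (i : Fin k) (j : Fin n) :
    X i j = true ↔
      (Finset.univ.filter (fun j' => colSum X j ≤ colSum X j')).card ≤ rowSum X i := by
  simp only [colSum_eq_card, rowSum_eq_card]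
  constructor
  · intro h
    apply Finset.card_le_card
    intro j' hj'
    simp only [Finset.mem_filter, Finset.mem_univ, true_and] at hj'
    have : colSet X j ⊆ colSet X j' := by
      rcases hX j j' with hc | hc
      · exact hc
      · rw [Finset.eq_of_subset_of_card_le hc hj']
    have hm : i ∈ colSet X j' := this (by simp [colSet, h])
    simp only [rowSet, Finset.mem_filter, Finset.mem_univ, true_and]
    simpa [colSet] using hm
  · intro h
    by_contra hne
    have hsub : rowSet X i ⊆ Finset.univ.filter (fun j' => (colSet X j).card ≤ (colSet X j').card) := by
      intro j' hj'
      simp only [rowSet, Finset.mem_filter, Finset.mem_univ, true_and] at hj'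
      have : colSet X j ⊆ colSet X j' := by
        rcases hX j j' with hc | hc
        · exact hc
        · exfalso
          exact hne (by simpa [colSet] using hc (by simp [colSet, hj']))
      simp only [Finset.mem_filter, Finset.mem_univ, true_and]
      exact Finset.card_le_card this
    have hjmem : j ∈ Finset.univ.filter (fun j' => (colSet X j).card ≤ (colSet X j').card) := by
      simp
    have hjnot : j ∉ rowSet X i := by simp [rowSet, hne]
    have := Finset.card_lt_card ((Finset.ssubset_iff_of_subset hsub).2 ⟨j, hjmem, hjnot⟩)
    omega

lemma lonesum_of_chain {k n : ℕ} (A : Matrix (Fin k) (Fin n) Bool) (hA : ChainCond A) :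
    IsLonesum A := by
  intro B hrow hcol
  -- step: B is also a chain
  have hcolcard : ∀ j, (colSet B j).card = (colSet A j).card := by
    intro j; rw [← colSum_eq_card, ← colSum_eq_card]; exact hcol j
  have hAmin : ∀ p ∈ (Finset.univ : Finset (Fin n)).offDiag,
      (colSet A p.1 ∩ colSet A p.2).card = min (colSet A p.1).card (colSet A p.2).card := by
    intro p _
    rcases hA p.1 p.2 with hc | hc
    · rw [Finset.inter_eq_left.2 hc, min_eq_left (Finset.card_le_card hc)]
    · rw [Finset.inter_eq_right.2 hc, min_eq_right (Finset.card_le_card hc)]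
  have hBle : ∀ p ∈ (Finset.univ : Finset (Fin n)).offDiag,
      (colSet B p.1 ∩ colSet B p.2).card ≤ min (colSet A p.1).card (colSet A p.2).card := by
    intro p _
    rw [← hcolcard, ← hcolcard]
    exact le_min (Finset.card_le_card Finset.inter_subset_left)
      (Finset.card_le_card Finset.inter_subset_right)
  have hsums : ∑ p ∈ (Finset.univ : Finset (Fin n)).offDiag, (colSet B p.1 ∩ colSet B p.2).card
      = ∑ p ∈ (Finset.univ : Finset (Fin n)).offDiag, min (colSet A p.1).card (colSet A p.2).card := by
    rw [← double_count]
    have : ∀ i, (rowSet B i).offDiag.card = (rowSet A i).offDiag.card := by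
      intro i
      rw [Finset.offDiag_card, Finset.offDiag_card, ← rowSum_eq_card, ← rowSum_eq_card, hrow]
    rw [Finset.sum_congr rfl (fun i _ => this i), double_count]
    exact Finset.sum_congr rfl hAmin
  have hBeq : ∀ p ∈ (Finset.univ : Finset (Fin n)).offDiag,
      (colSet B p.1 ∩ colSet B p.2).card = min (colSet A p.1).card (colSet A p.2).card :=
    (Finset.sum_eq_sum_iff_of_le hBle).1 hsums
  have hB : ChainCond B := by
    intro j j'
    by_cases hjj : j = j'
    · subst hjj; left; exact Finset.Subset.refl _
    have hp : ((j, j') : Fin n × Fin n) ∈ (Finset.univ : Finset (Fin n)).offDiag := by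
      simp [Finset.mem_offDiag, hjj]
    have := hBeq (j, j') hp
    simp only at this
    rw [← hcolcard, ← hcolcard] at this
    rcases le_total (colSet B j).card (colSet B j').card with hle | hle
    · left
      rw [min_eq_left hle] at this
      rw [← Finset.inter_eq_left]
      exact Finset.eq_of_subset_of_card_le Finset.inter_subset_left (le_of_eq this.symm)
    · right
      rw [min_eq_right hle] at this
      rw [← Finset.inter_eq_right]
      exact Finset.eq_of_subset_of_card_le Finset.inter_subset_right (le_of_eq this.symm)
  -- now both satisfy the formula with identical margins
  funext i j
  rw [Bool.eq_iff_iff, chain_formula B hB i j, chain_formula A hA i j, hrow]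
  have : ∀ j', colSum B j' = colSum A j' := hcol
  simp only [this]


theorem isLonesum_iff_chain {k n : ℕ} (A : Matrix (Fin k) (Fin n) Bool) :
    IsLonesum A ↔ ChainCond A := by
  constructor
  · intro h
    by_contra hc
    exact not_lonesum_of_not_chain A hc h
  · exact lonesum_of_chain A


def SurjCount (n m : ℕ) : ℕ :=
  (Finset.univ.filter (fun f : Fin n → Fin m => Function.Surjective f)).card

lemma surjCount_eq {n : ℕ} {β : Type*} [Fintype β] [DecidableEq β] :
    (Finset.univ.filter (fun f : Fin n → β => Function.Surjective f)).card
      = SurjCount n (Fintype.card β) := by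
  classical
  let e := Fintype.equivFin β
  apply Finset.card_bij' (fun f _ => e ∘ f) (fun g _ => e.symm ∘ g)
  · intro f hf
    simp only [Finset.mem_filter, Finset.mem_univ, true_and] at hf ⊢
    exact e.surjective.comp hf
  · intro g hg
    simp only [Finset.mem_filter, Finset.mem_univ, true_and] at hg ⊢
    exact e.symm.surjective.comp hg
  · intro f _; funext x; simp
  · intro g _; funext x; simp

lemma card_image_eq_fiber {n : ℕ} {β : Type*} [Fintype β] [DecidableEq β] (S : Finset β) :
    (Finset.univ.filter (fun f : Fin n → β => Finset.image f Finset.univ = S)).card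
      = SurjCount n S.card := by
  classical
  rw [← Fintype.card_coe S, ← surjCount_eq (n := n) (β := {x // x ∈ S})]
  refine Finset.card_bij'
    (fun f hf => fun x => (⟨f x, by
      have : Finset.image f Finset.univ = S := by
        simpa using (Finset.mem_filter.1 hf).2
      rw [← this]; exact Finset.mem_image_of_mem f (Finset.mem_univ x)⟩ : {x // x ∈ S}))
    (fun g _ => fun x => (g x : β)) ?_ ?_ ?_ ?_
  · intro f hf
    simp only [Finset.mem_filter, Finset.mem_univ, true_and] at hf ⊢
    intro b
    have hb : (b : β) ∈ Finset.image f Finset.univ := by rw [hf]; exact b.2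
    obtain ⟨x, _, hx⟩ := Finset.mem_image.1 hb
    exact ⟨x, Subtype.ext hx⟩
  · intro g hg
    simp only [Finset.mem_filter, Finset.mem_univ, true_and] at hg ⊢
    ext b
    simp only [Finset.mem_image, Finset.mem_univ, true_and]
    constructor
    · rintro ⟨x, rfl⟩; exact (g x).2
    · intro hb
      obtain ⟨x, hx⟩ := hg ⟨b, hb⟩
      exact ⟨x, by rw [hx]⟩
  · intro f _; funext x; rfl
  · intro g _; funext x; rfl

lemma classify {n : ℕ} {β : Type*} [Fintype β] [DecidableEq β]
    (P : Finset β → Prop) [DecidablePred P] :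
    (Finset.univ.filter (fun f : Fin n → β => P (Finset.image f Finset.univ))).card
      = ∑ S ∈ Finset.univ.filter P, SurjCount n S.card := by
  rw [Finset.card_eq_sum_card_fiberwise
      (f := fun f : Fin n → β => Finset.image f Finset.univ)
      (t := Finset.univ.filter P)
      (by intro f hf; simp only [Finset.mem_coe, Finset.mem_filter, Finset.mem_univ, true_and] at hf ⊢; exact hf)]
  apply Finset.sum_congr rfl
  intro S hS
  rw [← card_image_eq_fiber S]
  congr 1
  ext f
  simp only [Finset.mem_filter, Finset.mem_univ, true_and]
  constructor
  · rintro ⟨_, h2⟩; exact h2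
  · intro h2
    exact ⟨by rw [h2]; exact (Finset.mem_filter.1 hS).2, h2⟩

lemma pow_eq_sum_surj (n m : ℕ) :
    m ^ n = ∑ s ∈ Finset.range (m + 1), m.choose s * SurjCount n s := by
  classical
  have h1 := classify (n := n) (β := Fin m) (fun _ => True)
  simp only [Finset.filter_true] at h1
  have h2 : (Finset.univ : Finset (Fin n → Fin m)).card = m ^ n := by
    simp [Finset.card_univ]
  rw [← h2, h1]
  calc ∑ S : Finset (Fin m), SurjCount n S.card
      = ∑ s ∈ Finset.range (m + 1),
          ∑ S ∈ Finset.univ.filter (fun S : Finset (Fin m) => S.card = s), SurjCount n S.card := by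
        refine (Finset.sum_fiberwise_of_maps_to ?_ _).symm
        intro S _
        rw [Finset.mem_range]
        exact Nat.lt_succ_of_le (le_trans (Finset.card_le_univ S) (by simp))
    _ = ∑ s ∈ Finset.range (m + 1), m.choose s * SurjCount n s := by
        apply Finset.sum_congr rfl
        intro s _
        have hfil : (Finset.univ : Finset (Finset (Fin m))).filter (fun S => S.card = s)
            = Finset.univ.powersetCard s := by
          rw [Finset.powersetCard_eq_filter, Finset.powerset_univ]
        calc ∑ S ∈ Finset.univ.filter (fun S : Finset (Fin m) => S.card = s), SurjCount n S.card
            = ∑ S ∈ Finset.univ.filter (fun S : Finset (Fin m) => S.card = s), SurjCount n s := by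
              apply Finset.sum_congr rfl
              intro S hS
              rw [(Finset.mem_filter.1 hS).2]
          _ = m.choose s * SurjCount n s := by
              rw [Finset.sum_const, hfil, Finset.card_powersetCard]
              simp [mul_comm]


lemma euler_pow_mod {a M : ℕ} (h : Nat.Coprime a M) {n m : ℕ}
    (hnm : n ≡ m [MOD M.totient]) : a ^ n ≡ a ^ m [MOD M] := by
  have key : ∀ n m : ℕ, n ≤ m → n ≡ m [MOD M.totient] → a ^ n ≡ a ^ m [MOD M] := by
    intro n m hle hnm
    obtain ⟨c, hc⟩ := (Nat.modEq_iff_dvd' hle).1 hnm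
    have hm : m = n + M.totient * c := by omega
    subst hm
    calc a ^ n = a ^ n * 1 := by ring
      _ ≡ a ^ n * (a ^ M.totient) ^ c [MOD M] := by
          refine Nat.ModEq.mul_left _ ?_
          have := (Nat.ModEq.pow c (Nat.ModEq.pow_totient h).symm)
          simpa using this
      _ = a ^ (n + M.totient * c) := by ring
  rcases le_total n m with hle | hle
  · exact key n m hle hnm
  · exact (key m n hle hnm.symm).symm

lemma pow_congr_mod : ∀ M : ℕ, ∀ n m : ℕ, (∀ q, M.factorization q ≤ n) →
    (∀ q, M.factorization q ≤ m) → n ≡ m [MOD M.totient] → ∀ a, a ^ n ≡ a ^ m [MOD M] := by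
  intro M
  induction M using Nat.recOnPosPrimePosCoprime with
  | prime_pow p e hp he =>
    intro n m hn hm hnm a
    have hfac : (p ^ e).factorization p = e := by
      rw [Nat.Prime.factorization_pow hp]; simp
    have hen : e ≤ n := hfac ▸ hn p
    have hem : e ≤ m := hfac ▸ hm p
    by_cases hpa : p ∣ a
    · have h1 : p ^ e ∣ a ^ n := dvd_trans (pow_dvd_pow p hen) (pow_dvd_pow_of_dvd hpa n)
      have h2 : p ^ e ∣ a ^ m := dvd_trans (pow_dvd_pow p hem) (pow_dvd_pow_of_dvd hpa m)
      exact ((Nat.modEq_zero_iff_dvd).2 h1).trans ((Nat.modEq_zero_iff_dvd).2 h2).symm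
    · have hcop : Nat.Coprime a (p ^ e) :=
        Nat.Coprime.pow_right e (((Nat.Prime.coprime_iff_not_dvd hp).2 hpa).symm)
      exact euler_pow_mod hcop hnm
  | zero =>
    intro n m _ _ hnm a
    have : n = m := by simpa [Nat.ModEq] using hnm
    rw [this]
  | one =>
    intro n m _ _ _ a
    exact Nat.modEq_one
  | coprime a b ha hb hab iha ihb =>
    intro n m hn hm hnm x
    have ha0 : a ≠ 0 := by omega
    have hb0 : b ≠ 0 := by omega
    have hfab : ∀ q, a.factorization q ≤ (a * b).factorization q ∧
        b.factorization q ≤ (a * b).factorization q := by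
      intro q
      rw [Nat.factorization_mul ha0 hb0]
      simp
    have htot : (a * b).totient = a.totient * b.totient := Nat.totient_mul hab
    have h1 := iha n m (fun q => le_trans (hfab q).1 (hn q)) (fun q => le_trans (hfab q).1 (hm q))
      (hnm.of_dvd (htot ▸ Dvd.intro _ rfl)) x
    have h2 := ihb n m (fun q => le_trans (hfab q).2 (hn q)) (fun q => le_trans (hfab q).2 (hm q))
      (hnm.of_dvd (htot ▸ Dvd.intro_left _ rfl)) x
    exact (Nat.modEq_and_modEq_iff_modEq_mul hab).1 ⟨h1, h2⟩

lemma modeq_sum {ι : Type*} (s : Finset ι) (f g : ι → ℕ) (M : ℕ)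
    (h : ∀ i ∈ s, f i ≡ g i [MOD M]) : ∑ i ∈ s, f i ≡ ∑ i ∈ s, g i [MOD M] := by
  classical
  induction s using Finset.induction_on with
  | empty => rfl
  | insert _ _ hx ih =>
    rw [Finset.sum_insert hx, Finset.sum_insert hx]
    exact (h _ (Finset.mem_insert_self _ _)).add (ih (fun i hi => h i (Finset.mem_insert_of_mem hi)))

lemma surj_congr {M n m : ℕ} (hpow : ∀ a : ℕ, a ^ n ≡ a ^ m [MOD M]) :
    ∀ s, SurjCount n s ≡ SurjCount m s [MOD M] := by
  intro s
  induction s using Nat.strong_induction_on with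
  | _ s ih =>
    have h1 := pow_eq_sum_surj n s
    have h2 := pow_eq_sum_surj m s
    rw [Finset.sum_range_succ, Nat.choose_self, one_mul] at h1 h2
    have hsum : ∑ t ∈ Finset.range s, s.choose t * SurjCount n t
        ≡ ∑ t ∈ Finset.range s, s.choose t * SurjCount m t [MOD M] := by
      apply modeq_sum
      intro t ht
      exact Nat.ModEq.mul_left _ (ih t (Finset.mem_range.1 ht))
    have hp := hpow s
    rw [h1, h2] at hp
    exact hsum.add_left_cancel hp

instance {k n : ℕ} : DecidablePred (IsLonesum (k := k) (n := n)) := fun A => by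
  unfold IsLonesum; infer_instance

instance {k n : ℕ} : DecidablePred (ChainCond (k := k) (n := n)) := fun A => by
  unfold ChainCond; infer_instance

/-- the chain condition on the image -/
def PChain {k : ℕ} (C : Finset (Finset (Fin k))) : Prop :=
  ∀ S ∈ C, ∀ T ∈ C, S ⊆ T ∨ T ⊆ S

instance {k : ℕ} : DecidablePred (PChain (k := k)) := fun C => by
  unfold PChain; infer_instance

lemma colSet_decide {k n : ℕ} (f : Fin n → Finset (Fin k)) (j : Fin n) :
    colSet (fun i j => decide (i ∈ f j)) j = f j := by
  ext i; simp [colSet]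

lemma lonesumCount_eq (k n : ℕ) :
    lonesumCount k n
      = ∑ S ∈ Finset.univ.filter (PChain (k := k)), SurjCount n S.card := by
  rw [← classify (n := n) (β := Finset (Fin k)) PChain]
  rw [lonesumCount, Nat.card_eq_fintype_card, Fintype.card_subtype]
  have hfil : Finset.univ.filter (IsLonesum (k := k) (n := n))
      = Finset.univ.filter (ChainCond (k := k) (n := n)) := by
    apply Finset.filter_congr
    intro A _
    simp only [isLonesum_iff_chain]
  rw [hfil]
  refine Finset.card_bij' (fun A _ => fun j => colSet A j)
    (fun f _ => fun i j => decide (i ∈ f j)) ?_ ?_ ?_ ?_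
  · intro A hA
    simp only [Finset.mem_filter, Finset.mem_univ, true_and] at hA ⊢
    intro S hS T hT
    obtain ⟨j, _, rfl⟩ := Finset.mem_image.1 hS
    obtain ⟨j', _, rfl⟩ := Finset.mem_image.1 hT
    exact hA j j'
  · intro f hf
    simp only [Finset.mem_filter, Finset.mem_univ, true_and] at hf ⊢
    refine Finset.mem_filter.2 ⟨Finset.mem_univ _, ?_⟩
    intro j j'
    rw [colSet_decide, colSet_decide]
    exact hf _ (Finset.mem_image_of_mem f (Finset.mem_univ j)) _
      (Finset.mem_image_of_mem f (Finset.mem_univ j'))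
  · intro A _
    funext i j
    simp only [colSet, Finset.mem_filter, Finset.mem_univ, true_and]
    cases h : A i j <;> simp [h]
  · intro f _
    funext j
    exact colSet_decide f j

theorem lonesumCount_period_general (k M : ℕ) (hk : 0 < k) (hM : 0 < M)
    (n m : ℕ) (hn : ∀ q : ℕ, M.factorization q ≤ n)
    (hm : ∀ q : ℕ, M.factorization q ≤ m)
    (hnm : n ≡ m [MOD M.totient]) :
    lonesumCount k n ≡ lonesumCount k m [MOD M] := by
  rw [lonesumCount_eq, lonesumCount_eq]
  apply modeq_sum
  intro S _
  exact surj_congr (pow_congr_mod M n m hn hm hnm) S.card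
end

section
/- Let p be a prime number and let k and N be positive integers. If n and m are integers with n ≥ N, m ≥ N, and n ≡ m (mod φ(p^N)), where φ denotes Euler's totient function, then C_n^{(-k)} ≡ C_m^{(-k)} (mod p^N). -/
lemma stirling2_eq_zero : ∀ n m, n < m → stirling2 n m = 0
  | 0, _ + 1, _ => rfl
  | n + 1, m + 1, h => by
    show (m + 1) * stirling2 n (m + 1) + stirling2 n m = 0
    rw [stirling2_eq_zero n (m+1) (by omega), stirling2_eq_zero n m (by omega)]
    ring

/-- auxiliary sum -/
def Faux (n m : ℕ) : ℤ := ∑ j ∈ Finset.range (m+1),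
  (-1:ℤ)^j * (m.choose j) * ((j:ℤ)+1)^n

lemma Faux_rec (n s : ℕ) :
    Faux (n+1) (s+1) = ((s:ℤ)+2) * Faux n (s+1) - ((s:ℤ)+1) * Faux n s := by
  have hF : ((s:ℤ)+1) * Faux n s
      = ∑ j ∈ Finset.range (s+2), ((s:ℤ)+1) * ((-1:ℤ)^j * (s.choose j) * ((j:ℤ)+1)^n) := by
    rw [Faux, Finset.mul_sum,
      Finset.sum_range_succ (fun j => ((s:ℤ)+1) * ((-1:ℤ)^j * (s.choose j) * ((j:ℤ)+1)^n)) (s+1),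
      Nat.choose_succ_self]
    push_cast
    ring
  rw [hF, Faux, Faux, Finset.mul_sum, ← Finset.sum_sub_distrib]
  apply Finset.sum_congr rfl
  intro j hj
  have hj' : j ≤ s + 1 := by simpa [Nat.lt_succ_iff] using hj
  have h := Nat.choose_mul_succ_eq s j
  have h' : ((s.choose j : ℤ)) * ((s:ℤ)+1) = ((s+1).choose j : ℤ) * (((s:ℤ)+1) - j) := by
    have := congrArg (fun x : ℕ => (x : ℤ)) h
    push_cast [Nat.cast_sub hj'] at this
    convert this using 2 <;> push_cast <;> ring
  linear_combination ((-1:ℤ)^j * ((j:ℤ)+1)^n) * h'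

lemma key : ∀ n m : ℕ, (m.factorial : ℤ) * stirling2 (n+1) (m+1) = (-1:ℤ)^m * Faux n m := by
  intro n
  induction n with
  | zero =>
    intro m
    have h1 : stirling2 1 (m+1) = stirling2 0 m := by
      show (m+1) * stirling2 0 (m+1) + stirling2 0 m = stirling2 0 m
      rw [stirling2_eq_zero 0 (m+1) (by omega)]; ring
    have h2 : Faux 0 m = if m = 0 then 1 else 0 := by
      rw [← Int.alternating_sum_range_choose (n := m)]
      apply Finset.sum_congr rfl
      intro j _; simp
    rw [h1, h2]
    cases m with
    | zero => simp [stirling2]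
    | succ s => simp [stirling2, stirling2_eq_zero]
  | succ n ih =>
    intro m
    cases m with
    | zero =>
      have h1 : stirling2 (n+2) 1 = 1 * stirling2 (n+1) 1 + stirling2 (n+1) 0 := rfl
      have h0 : stirling2 (n+1) 0 = 0 := by cases n <;> rfl
      have h2 := ih 0
      simp only [Faux, Finset.range_one, Finset.sum_singleton] at h2 ⊢
      simp only [Nat.factorial_zero, Nat.cast_one, one_mul, pow_zero] at h2 ⊢
      rw [h1, h0]
      push_cast
      simp at h2 ⊢
      omega
    | succ s =>
      have e1 : stirling2 (n+2) (s+2) = (s+2) * stirling2 (n+1) (s+2) + stirling2 (n+1) (s+1) := rfl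
      have a := ih (s+1)
      have b := ih s
      have c := Faux_rec n s
      rw [e1]
      push_cast [Nat.factorial_succ] at a ⊢
      linear_combination ((s:ℤ)+2)*a + ((s:ℤ)+1)*b + (-1:ℤ)^s*c

lemma modEq_sum {α : Type*} {c : ℤ} (s : Finset α) {f g : α → ℤ}
    (h : ∀ i ∈ s, f i ≡ g i [ZMOD c]) :
    (∑ i ∈ s, f i) ≡ (∑ i ∈ s, g i) [ZMOD c] := by
  classical
  induction s using Finset.induction_on with
  | empty => simp
  | @insert a t hx ih =>
    rw [Finset.sum_insert hx, Finset.sum_insert hx]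
    exact (h a (Finset.mem_insert_self a t)).add
      (ih fun i hi => h i (Finset.mem_insert_of_mem hi))

lemma nat_pow_congr_aux (p N : ℕ) (hp : p.Prime) (c n m : ℕ)
    (hn : N ≤ n) (hnm : n ≤ m) (h : n ≡ m [MOD (p ^ N).totient]) :
    c ^ n ≡ c ^ m [MOD p ^ N] := by
  obtain ⟨t, ht⟩ : (p ^ N).totient ∣ m - n := (Nat.modEq_iff_dvd' hnm).mp h
  by_cases hdvd : p ∣ c
  · have h1 : p ^ N ∣ c ^ n := (pow_dvd_pow_of_dvd hdvd N).trans (pow_dvd_pow c hn)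
    have h2 : p ^ N ∣ c ^ m := (pow_dvd_pow_of_dvd hdvd N).trans (pow_dvd_pow c (hn.trans hnm))
    exact ((Nat.modEq_zero_iff_dvd).mpr h1).trans ((Nat.modEq_zero_iff_dvd).mpr h2).symm
  · have hcop : Nat.Coprime c (p ^ N) :=
      Nat.Coprime.pow_right N ((hp.coprime_iff_not_dvd.mpr hdvd).symm)
    have heuler : c ^ (p ^ N).totient ≡ 1 [MOD p ^ N] := Nat.ModEq.pow_totient hcop
    have : c ^ m = c ^ n * (c ^ (p ^ N).totient) ^ t := by
      rw [← pow_mul, ← pow_add]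
      congr 1
      omega
    calc c ^ n = c ^ n * 1 ^ t := by ring
      _ ≡ c ^ n * (c ^ (p ^ N).totient) ^ t [MOD p ^ N] :=
          (Nat.ModEq.refl _).mul ((heuler.symm).pow t)
      _ = c ^ m := this.symm

lemma int_pow_congr (p N : ℕ) (hp : p.Prime) (c n m : ℕ)
    (hn : N ≤ n) (hm : N ≤ m) (h : n ≡ m [MOD (p ^ N).totient]) :
    ((c:ℤ)) ^ n ≡ ((c:ℤ)) ^ m [ZMOD ((p:ℤ) ^ N)] := by
  have key : c ^ n ≡ c ^ m [MOD p ^ N] := by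
    rcases le_total n m with hh | hh
    · exact nat_pow_congr_aux p N hp c n m hn hh h
    · exact (nat_pow_congr_aux p N hp c m n hm hh h.symm).symm
  have : ((c ^ n : ℕ) : ℤ) ≡ ((c ^ m : ℕ) : ℤ) [ZMOD ((p ^ N : ℕ) : ℤ)] :=
    Int.natCast_modEq_iff.mpr key
  push_cast at this
  exact this

lemma sign_pow_congr (p N : ℕ) (hp : p.Prime) (hN : 0 < N) (n m : ℕ)
    (h : n ≡ m [MOD (p ^ N).totient]) :
    ((-1:ℤ)) ^ n ≡ ((-1:ℤ)) ^ m [ZMOD ((p:ℤ) ^ N)] := by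
  by_cases h2 : 2 ∣ (p ^ N).totient
  · have hpar : n ≡ m [MOD 2] := h.of_dvd h2
    simp only [Nat.ModEq] at hpar
    have : (-1:ℤ) ^ n = (-1:ℤ) ^ m := by
      rcases Nat.even_or_odd n with he | ho
      · have : Even m := by
          rw [Nat.even_iff] at he ⊢
          omega
        rw [he.neg_one_pow, this.neg_one_pow]
      · have : Odd m := by
          rw [Nat.odd_iff] at ho ⊢
          omega
        rw [ho.neg_one_pow, this.neg_one_pow]
    rw [this]
  · have hpN : p ^ N = 2 := by
      have htot := Nat.totient_prime_pow hp hN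
      rcases hp.eq_two_or_odd' with rfl | hodd
      · have : N = 1 := by
          by_contra hne
          have hN2 : 2 ≤ N := by omega
          apply h2
          rw [htot]
          have : 2 ∣ 2 ^ (N - 1) := dvd_pow_self 2 (by omega)
          exact Dvd.dvd.mul_right this _
        rw [this]; rfl
      · exfalso
        apply h2
        rw [htot]
        obtain ⟨k, hk⟩ := hodd
        exact Dvd.dvd.mul_left ⟨k, by omega⟩ _
    have hmod : ((p:ℤ) ^ N) = 2 := by exact_mod_cast congrArg (fun x : ℕ => (x:ℤ)) hpN
    rw [hmod]
    have hone : (-1:ℤ) ≡ 1 [ZMOD 2] := by decide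
    calc (-1:ℤ)^n ≡ 1^n [ZMOD 2] := hone.pow n
      _ = 1 := one_pow n
      _ = 1^m := (one_pow m).symm
      _ ≡ (-1:ℤ)^m [ZMOD 2] := (hone.pow m).symm

lemma polyBernoulliC_eq (k e R : ℕ) (h : e < R) :
    polyBernoulliC k e = ∑ mm ∈ Finset.range R, ∑ j ∈ Finset.range (mm+1),
      ((-1:ℤ)^e * ((j:ℤ)+1)^e) * ((-1:ℤ)^j * (mm.choose j) * ((mm:ℤ)+1)^k) := by
  rw [polyBernoulliC]
  have hsub : Finset.range (e+1) ⊆ Finset.range R := by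
    rw [Finset.range_subset_range]; omega
  have hext : (∑ mm ∈ Finset.range (e + 1),
        (-1 : ℤ) ^ mm * (mm.factorial : ℤ) * (stirling2 (e + 1) (mm + 1) : ℤ) * ((mm : ℤ) + 1) ^ k)
      = ∑ mm ∈ Finset.range R,
        (-1 : ℤ) ^ mm * (mm.factorial : ℤ) * (stirling2 (e + 1) (mm + 1) : ℤ) * ((mm : ℤ) + 1) ^ k := by
    apply Finset.sum_subset hsub
    intro x _ hx
    rw [Finset.mem_range, not_lt] at hx
    rw [stirling2_eq_zero (e+1) (x+1) (by omega)]
    push_cast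
    ring
  rw [hext, Finset.mul_sum]
  apply Finset.sum_congr rfl
  intro mm _
  have hkey := key e mm
  have hsq : (-1:ℤ)^mm * (-1:ℤ)^mm = 1 := by
    rw [← pow_add]
    exact Even.neg_one_pow ⟨mm, rfl⟩
  have hsum : (∑ j ∈ Finset.range (mm+1),
        ((-1:ℤ)^e * ((j:ℤ)+1)^e) * ((-1:ℤ)^j * (mm.choose j) * ((mm:ℤ)+1)^k))
      = (-1:ℤ)^e * ((mm:ℤ)+1)^k * Faux e mm := by
    rw [Faux, Finset.mul_sum]
    apply Finset.sum_congr rfl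
    intro j _
    ring
  rw [hsum]
  calc (-1:ℤ)^e * ((-1:ℤ)^mm * (mm.factorial : ℤ) * (stirling2 (e+1) (mm+1) : ℤ) * ((mm:ℤ)+1)^k)
      = (-1:ℤ)^e * ((mm:ℤ)+1)^k * ((-1:ℤ)^mm * ((mm.factorial : ℤ) * (stirling2 (e+1) (mm+1) : ℤ))) := by ring
    _ = (-1:ℤ)^e * ((mm:ℤ)+1)^k * ((-1:ℤ)^mm * ((-1:ℤ)^mm * Faux e mm)) := by rw [hkey]
    _ = (-1:ℤ)^e * ((mm:ℤ)+1)^k * (((-1:ℤ)^mm * (-1:ℤ)^mm) * Faux e mm) := by ring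
    _ = (-1:ℤ)^e * ((mm:ℤ)+1)^k * Faux e mm := by rw [hsq, one_mul]

theorem polyBernoulliC_period_prime_pow (p : ℕ) (hp : p.Prime) (k N : ℕ)
    (hk : 0 < k) (hN : 0 < N) (n m : ℕ) (hn : N ≤ n) (hm : N ≤ m)
    (hnm : n ≡ m [MOD (p ^ N).totient]) :
    polyBernoulliC k n ≡ polyBernoulliC k m [ZMOD ((p : ℤ) ^ N)] := by
  rw [polyBernoulliC_eq k n (max n m + 1) (by omega),
    polyBernoulliC_eq k m (max n m + 1) (by omega)]
  apply modEq_sum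
  intro mm _
  apply modEq_sum
  intro j _
  have hpow := int_pow_congr p N hp (j+1) n m hn hm hnm
  push_cast at hpow
  exact ((sign_pow_congr p N hp hN n m hnm).mul hpow).mul (Int.ModEq.refl _)
end

section
/- Let p be an odd prime and k a nonnegative integer. Then B_{p-1}^{(-k)} ≡ 1 (mod p) if k = 0 or k is not divisible by p-1, and B_{p-1}^{(-k)} ≡ 2 (mod p) if k ≠ 0 and k is divisible by p-1. -/
open Finset

theorem Int.mul_choose_add_one_eq (m l : ℕ) :
    (l : ℤ) * (m + 1).choose l = (m + 1) * ((m + 1).choose l - m.choose l) := by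
  cases l with
  | zero => simp
  | succ j =>
    have hmul : ((m : ℤ) + 1) * m.choose j = (m + 1).choose (j + 1) * (j + 1) := by
      exact_mod_cast Nat.add_one_mul_choose_eq m j
    have hpascal : ((m + 1).choose (j + 1) : ℤ) = m.choose j + m.choose (j + 1) := by
      exact_mod_cast Nat.choose_succ_succ m j
    push_cast
    linear_combination -hmul - ((m : ℤ) + 1) * hpascal

theorem sum_alternating_choose_mul_pow_add_one (n m : ℕ) :
    ∑ l ∈ range (m + 2), (-1 : ℤ) ^ l * (m + 1).choose l * (l : ℤ) ^ (n + 1) =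
      (m + 1) * (∑ l ∈ range (m + 2), (-1 : ℤ) ^ l * (m + 1).choose l * (l : ℤ) ^ n -
        ∑ l ∈ range (m + 1), (-1 : ℤ) ^ l * m.choose l * (l : ℤ) ^ n) := by
  have hext : ∑ l ∈ range (m + 1), (-1 : ℤ) ^ l * m.choose l * (l : ℤ) ^ n =
      ∑ l ∈ range (m + 2), (-1 : ℤ) ^ l * m.choose l * (l : ℤ) ^ n := by
    simp [sum_range_succ _ (m + 1)]
  rw [hext, ← sum_sub_distrib, mul_sum]
  refine sum_congr rfl fun l _ => ?_
  linear_combination (-1 : ℤ) ^ l * (l : ℤ) ^ n * Int.mul_choose_add_one_eq m l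

theorem neg_one_pow_mul_factorial_mul_stirling2 (n m : ℕ) :
    (-1 : ℤ) ^ m * m.factorial * stirling2 n m =
      ∑ l ∈ range (m + 1), (-1 : ℤ) ^ l * m.choose l * (l : ℤ) ^ n := by
  induction n generalizing m with
  | zero =>
    simp only [pow_zero, mul_one, Int.alternating_sum_range_choose]
    cases m <;> simp [stirling2]
  | succ n ih =>
    cases m with
    | zero => simp [stirling2]
    | succ m =>
      rw [sum_alternating_choose_mul_pow_add_one, ← ih, ← ih, stirling2, Nat.factorial_succ]
      push_cast
      ring

theorem ZMod.sum_range_natCast {M : Type*} [AddCommMonoid M] (n : ℕ) [NeZero n]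
    (f : ZMod n → M) : ∑ i ∈ range n, f i = ∑ x, f x :=
  sum_nbij' (↑) ZMod.val (fun _ _ => mem_univ _) (fun x _ => mem_range.2 x.val_lt)
    (fun _ hi => ZMod.val_cast_of_lt (mem_range.1 hi)) (fun x _ => ZMod.natCast_zmod_val x)
    (fun _ _ => rfl)

theorem FiniteField.sum_pow {K : Type*} [Field K] [Fintype K] (k : ℕ) :
    ∑ x : K, x ^ k = if k ≠ 0 ∧ Fintype.card K - 1 ∣ k then -1 else 0 := by
  classical
  rcases eq_or_ne k 0 with rfl | hk
  · simp
  calc ∑ x : K, x ^ k = ∑ x : Kˣ, (x : K) ^ k := by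
        rw [Fintype.sum_eq_add_sum_compl 0, zero_pow hk, zero_add]
        refine (sum_nbij ((↑) : Kˣ → K) (fun u _ => by simp) Units.val_injective.injOn
          (fun x hx => ⟨Units.mk0 x (by simpa using hx), mem_univ _, rfl⟩) fun _ _ => rfl).symm
    _ = _ := by simp [FiniteField.sum_pow_units, hk]

theorem ZMod.sum_alternating_choose_mul_pow_card_sub_one {p : ℕ} [hp : Fact p.Prime] {m : ℕ}
    (hm : m < p) :
    ∑ l ∈ range (m + 1), (-1 : ZMod p) ^ l * m.choose l * (l : ZMod p) ^ (p - 1) =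
      (if m = 0 then 1 else 0) - 1 := by
  have hpow : ∀ l ∈ range (m + 1), (l : ZMod p) ^ (p - 1) = 1 - if l = 0 then 1 else 0 := by
    intro l hl
    rcases eq_or_ne l 0 with rfl | hl0
    · simp [zero_pow (Nat.sub_ne_zero_of_lt hp.out.one_lt)]
    · rw [if_neg hl0, sub_zero]
      refine ZMod.pow_card_sub_one_eq_one ?_
      rw [Ne, ZMod.natCast_eq_zero_iff]
      exact Nat.not_dvd_of_pos_of_lt (Nat.pos_of_ne_zero hl0) (by grind)
  have halt := congrArg (Int.cast : ℤ → ZMod p) (Int.alternating_sum_range_choose (n := m))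
  push_cast at halt
  rw [sum_congr rfl fun l hl => by rw [hpow l hl]]
  simp [mul_sub, sum_sub_distrib, halt]

theorem polyBernoulliB_pred_prime_cast {p : ℕ} [hp : Fact p.Prime] (k : ℕ) :
    (polyBernoulliB k (p - 1) : ZMod p) = 1 - ∑ x : ZMod p, x ^ k := by
  have hcoeff : ∀ m ∈ range p, ((-1) ^ m * m.factorial * stirling2 (p - 1) m : ZMod p) =
      (if m = 0 then 1 else 0) - 1 := by
    intro m hm
    rw [← ZMod.sum_alternating_choose_mul_pow_card_sub_one (mem_range.1 hm)]
    exact_mod_cast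
      congrArg (Int.cast : ℤ → ZMod p) (neg_one_pow_mul_factorial_mul_stirling2 (p - 1) m)
  calc (polyBernoulliB k (p - 1) : ZMod p)
      = ∑ m ∈ range p, ((if m = 0 then 1 else 0) - 1) * ((m : ZMod p) + 1) ^ k := by
        rw [polyBernoulliB, Nat.sub_add_cancel hp.out.one_lt.le]
        push_cast
        rw [ZMod.pow_card_sub_one_eq_one (neg_ne_zero.2 one_ne_zero), one_mul]
        exact sum_congr rfl fun m hm => by rw [hcoeff m hm]
    _ = 1 - ∑ m ∈ range p, ((m : ZMod p) + 1) ^ k := by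
        simp [sub_mul, sum_sub_distrib, hp.out.pos]
    _ = 1 - ∑ x : ZMod p, x ^ k := by
        rw [ZMod.sum_range_natCast p fun x => (x + 1) ^ k,
          Fintype.sum_equiv (Equiv.addRight 1) (fun x => (x + 1) ^ k) (· ^ k) fun _ => rfl]

theorem polyBernoulliB_pred_prime_general (p : ℕ) (hp : p.Prime) (k : ℕ) :
    ((k = 0 ∨ ¬ (p - 1) ∣ k) →
      polyBernoulliB k (p - 1) ≡ 1 [ZMOD (p : ℤ)]) ∧
    ((k ≠ 0 ∧ (p - 1) ∣ k) →
      polyBernoulliB k (p - 1) ≡ 2 [ZMOD (p : ℤ)]) := by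
  have : Fact p.Prime := ⟨hp⟩
  simp only [← ZMod.intCast_eq_intCast_iff, polyBernoulliB_pred_prime_cast,
    FiniteField.sum_pow, ZMod.card]
  refine ⟨fun h => ?_, fun h => ?_⟩
  · rw [if_neg (by tauto)]
    simp
  · rw [if_pos h]
    norm_num

theorem polyBernoulliB_pred_prime (p : ℕ) (hp : p.Prime) (hodd : Odd p) (k : ℕ) :
    ((k = 0 ∨ ¬ (p - 1) ∣ k) →
      polyBernoulliB k (p - 1) ≡ 1 [ZMOD (p : ℤ)]) ∧
    ((k ≠ 0 ∧ (p - 1) ∣ k) →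
      polyBernoulliB k (p - 1) ≡ 2 [ZMOD (p : ℤ)]) :=
  polyBernoulliB_pred_prime_general p hp k
end

section
/- For any odd prime p and any nonnegative integer k, we have C_{p-1}^{(-k-1)} ≡ 1 (mod p). -/
/-!
By the explicit formula `(-1)^m m! S(n+1, m+1) = ∑_l (-1)^l C(m,l) (l+1)^n`, the number
`C_{p-1}^{(-k-1)}` equals `(-1)^(p-1) ∑_m (∑_l (-1)^l C(m,l) (l+1)^(p-1)) (m+1)^(k+1)`.
Modulo `p` the sign is `1` by Fermat, the term `m = p-1` carries the factor `p^(k+1)`, and for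
`m ≤ p-2` Fermat turns the inner sum into `∑_l (-1)^l C(m,l)`, which is `1` for `m = 0` and `0`
otherwise.
-/

open Finset

theorem Nat.add_one_mul_add_one_choose_eq (m l : ℕ) :
    (m + 1) * (m + 1).choose l = (m + 1) * m.choose l + l * (m + 1).choose l := by
  cases l with
  | zero => simp
  | succ j =>
    rw [mul_comm (j + 1), ← Nat.add_one_mul_choose_eq, Nat.choose_succ_succ']
    ring

section CommRing

variable {R : Type*} [CommRing R]

theorem alternating_sum_range_choose (m : ℕ) :
    ∑ l ∈ range (m + 1), (-1 : R) ^ l * (m.choose l : R) = if m = 0 then 1 else 0 := by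
  have h := congrArg (Int.cast : ℤ → R) (Int.alternating_sum_range_choose (n := m))
  push_cast [apply_ite (Int.cast : ℤ → R)] at h
  exact h

/-- The signed Stirling recurrence, for the right-hand side of
`neg_one_pow_mul_factorial_mul_stirling2_succ`. -/
theorem sum_neg_one_pow_mul_choose_mul_succ_pow_succ (n m : ℕ) :
    ∑ l ∈ range (m + 2), (-1 : R) ^ l * ((m + 1).choose l : R) * ((l : R) + 1) ^ (n + 1) =
      ((m : R) + 2) *
          ∑ l ∈ range (m + 2), (-1 : R) ^ l * ((m + 1).choose l : R) * ((l : R) + 1) ^ n -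
        ((m : R) + 1) *
          ∑ l ∈ range (m + 1), (-1 : R) ^ l * (m.choose l : R) * ((l : R) + 1) ^ n := by
  have hextend : ∑ l ∈ range (m + 1), (-1 : R) ^ l * (m.choose l : R) * ((l : R) + 1) ^ n =
      ∑ l ∈ range (m + 2), (-1 : R) ^ l * (m.choose l : R) * ((l : R) + 1) ^ n := by
    rw [sum_range_succ _ (m + 1), Nat.choose_succ_self, Nat.cast_zero, mul_zero, zero_mul, add_zero]
  rw [hextend, mul_sum, mul_sum, ← sum_sub_distrib]
  refine sum_congr rfl fun l _ => ?_
  have h := congrArg (Nat.cast : ℕ → R) (Nat.add_one_mul_add_one_choose_eq m l)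
  push_cast at h
  linear_combination -(-1 : R) ^ l * ((l : R) + 1) ^ n * h

theorem neg_one_pow_mul_factorial_mul_stirling2_succ (n m : ℕ) :
    (-1 : R) ^ m * (m.factorial : R) * (stirling2 (n + 1) (m + 1) : R) =
      ∑ l ∈ range (m + 1), (-1 : R) ^ l * (m.choose l : R) * ((l : R) + 1) ^ n := by
  induction n generalizing m with
  | zero =>
    rcases m with _ | m
    · simp [stirling2]
    · simp [alternating_sum_range_choose, stirling2]
  | succ n ih =>
    rcases m with _ | m
    · simpa [stirling2] using ih 0
    · rw [sum_neg_one_pow_mul_choose_mul_succ_pow_succ, ← ih (m + 1), ← ih m, stirling2,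
        Nat.factorial_succ]
      push_cast
      ring

end CommRing

theorem sum_neg_one_pow_mul_choose_mul_succ_pow_card_sub_one {p : ℕ} [Fact p.Prime] {m : ℕ}
    (hm : m + 1 < p) :
    ∑ l ∈ range (m + 1),
        (-1 : ZMod p) ^ l * (m.choose l : ZMod p) * ((l : ZMod p) + 1) ^ (p - 1) =
      if m = 0 then 1 else 0 := by
  rw [← alternating_sum_range_choose]
  refine sum_congr rfl fun l hl => ?_
  have hl : l + 1 < p := by rw [mem_range] at hl; omega
  have hunit : (l : ZMod p) + 1 ≠ 0 := by
    exact_mod_cast (ZMod.natCast_eq_zero_iff _ _).not.mpr (Nat.not_dvd_of_pos_of_lt l.succ_pos hl)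
  rw [ZMod.pow_card_sub_one_eq_one hunit, mul_one]

theorem polyBernoulliC_pred_prime_general (p : ℕ) (hp : p.Prime) (k : ℕ) :
    polyBernoulliC (k + 1) (p - 1) ≡ 1 [ZMOD (p : ℤ)] := by
  have : Fact p.Prime := ⟨hp⟩
  have hp1 : p - 1 + 1 = p := Nat.sub_add_cancel hp.one_le
  rw [← ZMod.intCast_eq_intCast_iff, polyBernoulliC]
  push_cast
  simp_rw [neg_one_pow_mul_factorial_mul_stirling2_succ, hp1]
  rw [ZMod.pow_card_sub_one_eq_one (neg_ne_zero.mpr one_ne_zero), one_mul]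
  rw [show range p = range (p - 1 + 1) by rw [hp1], sum_range_succ, ← Nat.cast_add_one, hp1,
    ZMod.natCast_self, zero_pow k.succ_ne_zero, mul_zero, add_zero]
  rw [sum_congr rfl fun m hm => by
    rw [sum_neg_one_pow_mul_choose_mul_succ_pow_card_sub_one (by rw [mem_range] at hm; omega)]]
  simpa [ite_mul] using hp.one_lt

theorem polyBernoulliC_pred_prime (p : ℕ) (hp : p.Prime) (hodd : Odd p) (k : ℕ) :
    polyBernoulliC (k + 1) (p - 1) ≡ 1 [ZMOD (p : ℤ)] :=
  polyBernoulliC_pred_prime_general p hp k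
end

section
/- Let p be an odd prime and let k and n be positive integers. If k ≡ n ≡ 0 (mod p-1) or k ≡ n ≡ 1 (mod p-1), then B_n^{(-k)} ≡ 2 (mod p). -/
/-!
Inclusion–exclusion gives `(-1)^m m! S(n,m) = ∑_{l ≤ m} (-1)^l C(m,l) l^n`, so `B_n^{(-k)}` is a
polynomial expression in the powers `l^n` and `(m+1)^k`. In `ZMod p` Fermat's little theorem makes
`x^n` depend only on `n mod (p-1)` once `n > 0`, hence `B_n^{(-k)} mod p` depends only on `k` and `n`
modulo `p - 1`. It remains to note `B_1^{(-1)} = 2`, and that in `B_{p-1}^{(-(p-1))}` each term with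
`1 ≤ m ≤ p-2` is `≡ -1` while the others vanish, giving `-(p-2) ≡ 2`.
-/

open Finset Nat

section CommRing

variable {R : Type*} [CommRing R]

theorem cast_choose_succ_mul (m l : ℕ) :
    ((m + 1).choose l * l : R) = (m + 1) * ((m + 1).choose l - m.choose l) := by
  cases l with
  | zero => simp
  | succ l =>
    have h := congrArg (Nat.cast : ℕ → R) (add_one_mul_choose_eq m l)
    have h' := congrArg (Nat.cast : ℕ → R) (choose_succ_succ' m l)
    push_cast at h h' ⊢
    linear_combination -h - (m + 1 : R) * h'

theorem sum_range_choose_mul_pow_eq_stirlingSecond (n m : ℕ) :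
    ∑ l ∈ range (m + 1), (-1 : R) ^ l * m.choose l * (l : R) ^ n =
      (-1) ^ m * m ! * stirlingSecond n m := by
  induction n generalizing m with
  | zero =>
    have h := congrArg (Int.cast : ℤ → R) (Int.alternating_sum_range_choose (n := m))
    push_cast at h
    simp only [pow_zero, mul_one, h]
    cases m <;> simp
  | succ n ih =>
    cases m with
    | zero => simp
    | succ m =>
      have hsplit (l : ℕ) : (-1 : R) ^ l * (m + 1).choose l * (l : R) ^ (n + 1) =
          (m + 1) * ((-1) ^ l * (m + 1).choose l * (l : R) ^ n) -
            (m + 1) * ((-1) ^ l * m.choose l * (l : R) ^ n) := by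
        linear_combination ((-1 : R) ^ l * (l : R) ^ n) * cast_choose_succ_mul (R := R) m l
      have htop : ∑ l ∈ range (m + 2), (-1 : R) ^ l * m.choose l * (l : R) ^ n =
          ∑ l ∈ range (m + 1), (-1 : R) ^ l * m.choose l * (l : R) ^ n := by
        simp [sum_range_succ _ (m + 1), choose_succ_self]
      simp only [hsplit, sum_sub_distrib, ← mul_sum, htop, ih, stirlingSecond_succ_succ,
        factorial_succ]
      push_cast
      ring

end CommRing

theorem ZMod.pow_eq_pow_of_modEq {p : ℕ} [Fact p.Prime] {a b : ℕ} (ha : a ≠ 0) (hb : b ≠ 0)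
    (h : a ≡ b [MOD p - 1]) (x : ZMod p) : x ^ a = x ^ b := by
  rcases eq_or_ne x 0 with rfl | hx
  · simp [zero_pow ha, zero_pow hb]
  · calc x ^ a = x ^ (a % orderOf x) := (pow_mod_orderOf x a).symm
      _ = x ^ (b % orderOf x) := by rw [h.of_dvd (ZMod.orderOf_dvd_card_sub_one hx)]
      _ = x ^ b := pow_mod_orderOf x b

theorem ZMod.neg_one_pow_mul_factorial_mul_stirlingSecond_eq_of_modEq {p : ℕ} [Fact p.Prime]
    {n n' : ℕ} (hn : n ≠ 0) (hn' : n' ≠ 0) (h : n ≡ n' [MOD p - 1]) (m : ℕ) :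
    ((-1) ^ m * m ! * stirlingSecond n m : ZMod p) = (-1) ^ m * m ! * stirlingSecond n' m := by
  simp only [← sum_range_choose_mul_pow_eq_stirlingSecond, ZMod.pow_eq_pow_of_modEq hn hn' h]

theorem ZMod.neg_one_pow_mul_factorial_mul_stirlingSecond_card_sub_one {p : ℕ} [Fact p.Prime]
    {m : ℕ} (hm : m < p) :
    ((-1) ^ m * m ! * stirlingSecond (p - 1) m : ZMod p) = if m = 0 then 0 else -1 := by
  have hterm (l : ℕ) (hl : l ∈ range (m + 1)) :
      (-1 : ZMod p) ^ l * m.choose l * (l : ZMod p) ^ (p - 1) =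
        (-1) ^ l * m.choose l * (l : ZMod p) ^ 0 - if l = 0 then 1 else 0 := by
    rcases eq_or_ne l 0 with rfl | hl0
    · simp [zero_pow (Nat.sub_ne_zero_of_lt (Fact.out : p.Prime).one_lt)]
    have hl : (l : ZMod p) ≠ 0 := by
      rw [Ne, ZMod.natCast_eq_zero_iff]
      exact Nat.not_dvd_of_pos_of_lt (Nat.pos_of_ne_zero hl0) (by simp at hl; omega)
    simp [ZMod.pow_card_sub_one_eq_one hl, hl0]
  rw [← sum_range_choose_mul_pow_eq_stirlingSecond, sum_congr rfl hterm, sum_sub_distrib,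
    sum_range_choose_mul_pow_eq_stirlingSecond, sum_ite_eq']
  cases m <;> simp

theorem polyBernoulliB_eq_sum_range (k n : ℕ) {N : ℕ} (hN : n < N) :
    polyBernoulliB k n = (-1) ^ n * ∑ m ∈ range N,
      (-1 : ℤ) ^ m * m ! * stirlingSecond n m * ((m : ℤ) + 1) ^ k := by
  rw [polyBernoulliB, stirling2_eq_stirlingSecond]
  congr 1
  refine sum_subset (range_subset_range.mpr hN) fun m _ hm => ?_
  rw [stirlingSecond_eq_zero_of_lt (by simpa using hm)]
  simp

theorem polyBernoulliB_modEq_of_modEq {p : ℕ} (hp : p.Prime) {k k' n n' : ℕ} (hk : k ≠ 0)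
    (hk' : k' ≠ 0) (hn : n ≠ 0) (hn' : n' ≠ 0) (hkk' : k ≡ k' [MOD p - 1])
    (hnn' : n ≡ n' [MOD p - 1]) :
    polyBernoulliB k n ≡ polyBernoulliB k' n' [ZMOD p] := by
  have := Fact.mk hp
  rw [← ZMod.intCast_eq_intCast_iff, polyBernoulliB_eq_sum_range k n (N := n + n' + 1) (by omega),
    polyBernoulliB_eq_sum_range k' n' (N := n + n' + 1) (by omega)]
  push_cast
  rw [ZMod.pow_eq_pow_of_modEq hn hn' hnn' (-1)]
  congr 1
  refine sum_congr rfl fun m _ => ?_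
  rw [ZMod.pow_eq_pow_of_modEq hk hk' hkk',
    ZMod.neg_one_pow_mul_factorial_mul_stirlingSecond_eq_of_modEq hn hn' hnn' m]

theorem polyBernoulliB_one_one : polyBernoulliB 1 1 = 2 := by
  decide

theorem polyBernoulliB_card_sub_one_modEq {p : ℕ} (hp : p.Prime) :
    polyBernoulliB (p - 1) (p - 1) ≡ 2 [ZMOD p] := by
  have := Fact.mk hp
  have hp2 := hp.two_le
  have hcast : ((p - 1 : ℕ) : ZMod p) = -1 := by simp [Nat.cast_sub hp.one_le]
  have hterm (m : ℕ) (hm : m ∈ range (p - 1)) :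
      (-1 : ZMod p) ^ m * m ! * stirlingSecond (p - 1) m * ((m : ZMod p) + 1) ^ (p - 1) =
        (if m = 0 then 1 else 0) - 1 := by
    have hm1 : (m : ZMod p) + 1 ≠ 0 := by
      rw [← Nat.cast_succ, Ne, ZMod.natCast_eq_zero_iff]
      exact Nat.not_dvd_of_pos_of_lt m.succ_pos (by simp at hm; omega)
    rw [ZMod.neg_one_pow_mul_factorial_mul_stirlingSecond_card_sub_one (by simp at hm; omega),
      ZMod.pow_card_sub_one_eq_one hm1]
    split_ifs <;> simp
  rw [← ZMod.intCast_eq_intCast_iff, polyBernoulliB_eq_sum_range _ _ (N := p - 1 + 1) (by omega)]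
  push_cast
  rw [ZMod.pow_card_sub_one_eq_one (neg_ne_zero.mpr one_ne_zero), one_mul, sum_range_succ, hcast,
    neg_add_cancel, zero_pow (by omega), mul_zero, add_zero, sum_congr rfl hterm, sum_sub_distrib,
    sum_ite_eq', if_pos (by simp; omega), sum_const, card_range, nsmul_one, hcast]
  ring

theorem polyBernoulliB_eq_two_mod_p_general (p : ℕ) (hp : p.Prime)
    (k n : ℕ) (hk : 0 < k) (hn : 0 < n)
    (h : (k ≡ 0 [MOD p - 1] ∧ n ≡ 0 [MOD p - 1]) ∨
         (k ≡ 1 [MOD p - 1] ∧ n ≡ 1 [MOD p - 1])) :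
    polyBernoulliB k n ≡ 2 [ZMOD (p : ℤ)] := by
  rcases h with ⟨hk0, hn0⟩ | ⟨hk1, hn1⟩
  · have hp1 : p - 1 ≠ 0 := Nat.sub_ne_zero_of_lt hp.one_lt
    have hself : p - 1 ≡ 0 [MOD p - 1] := Nat.modEq_zero_iff_dvd.mpr dvd_rfl
    exact (polyBernoulliB_modEq_of_modEq hp hk.ne' hp1 hn.ne' hp1 (hk0.trans hself.symm)
      (hn0.trans hself.symm)).trans (polyBernoulliB_card_sub_one_modEq hp)
  · rw [← polyBernoulliB_one_one]
    exact polyBernoulliB_modEq_of_modEq hp hk.ne' one_ne_zero hn.ne' one_ne_zero hk1 hn1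

theorem polyBernoulliB_eq_two_mod_p (p : ℕ) (hp : p.Prime) (hodd : Odd p)
    (k n : ℕ) (hk : 0 < k) (hn : 0 < n)
    (h : (k ≡ 0 [MOD p - 1] ∧ n ≡ 0 [MOD p - 1]) ∨
         (k ≡ 1 [MOD p - 1] ∧ n ≡ 1 [MOD p - 1])) :
    polyBernoulliB k n ≡ 2 [ZMOD (p : ℤ)] :=
  polyBernoulliB_eq_two_mod_p_general p hp k n hk hn h
end

section
/- Let p be a prime and let k and N be positive integers. For any integer n ≥ N, we have Σ_{i=0}^{φ(p^N)-1} B_k^{(-(n+i))} ≡ 0 (mod p^N). -/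
open Finset
open scoped Nat

theorem Int.dvd_pow_totient_sub_one_of_isCoprime {n : ℕ} {a : ℤ} (h : IsCoprime (n : ℤ) a) :
    (n : ℤ) ∣ a ^ n.totient - 1 := by
  have hu := (ZMod.coe_int_isUnit_iff_isCoprime a n).2 h
  rw [← ZMod.intCast_zmod_eq_zero_iff_dvd, Int.cast_sub, Int.cast_pow, Int.cast_one, sub_eq_zero,
    ← hu.unit_spec, ← Units.val_pow_eq_pow_val, ZMod.pow_totient, Units.val_one]

theorem Int.prime_pow_dvd_pow_mul_pow_totient_sub_one {p : ℕ} (hp : p.Prime) {N n : ℕ}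
    (hn : N ≤ n) (a : ℤ) : (p : ℤ) ^ N ∣ a ^ n * (a ^ (p ^ N).totient - 1) := by
  by_cases hpa : (p : ℤ) ∣ a
  · exact ((pow_dvd_pow_of_dvd hpa N).trans (pow_dvd_pow a hn)).mul_right _
  · have hcop : IsCoprime ((p ^ N : ℕ) : ℤ) a := by
      push_cast
      exact ((Nat.prime_iff_prime_int.mp hp).coprime_iff_not_dvd.mpr hpa).pow_left
    simpa using (Int.dvd_pow_totient_sub_one_of_isCoprime hcop).mul_left (a ^ n)

theorem prime_pow_dvd_factorial_mul_pow_mul_geom_sum {p : ℕ} (hp : p.Prime) {N n m : ℕ}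
    (hn : N ≤ n) (hm : 0 < m) :
    (p : ℤ) ^ N ∣
      m ! * ((m + 1 : ℤ) ^ n * ∑ i ∈ range (p ^ N).totient, (m + 1 : ℤ) ^ i) := by
  obtain ⟨m, rfl⟩ := Nat.exists_eq_succ_of_ne_zero hm.ne'
  have htelescope :
      ((m + 1)! : ℤ) * ((m + 2 : ℤ) ^ n * ∑ i ∈ range (p ^ N).totient, (m + 2 : ℤ) ^ i)
      = m ! * ((m + 2 : ℤ) ^ n * ((m + 2 : ℤ) ^ (p ^ N).totient - 1)) := by
    rw [← geom_sum_mul, Nat.factorial_succ]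
    push_cast
    ring
  push_cast
  rw [add_assoc, one_add_one_eq_two, htelescope]
  exact (Int.prime_pow_dvd_pow_mul_pow_totient_sub_one hp hn _).mul_left _

theorem sum_polyBernoulliB_upper (k n L : ℕ) :
    ∑ i ∈ range L, polyBernoulliB (n + i) k
      = (-1) ^ k * ∑ m ∈ range (k + 1), (-1) ^ m * (stirling2 k m : ℤ) *
          (m ! * ((m + 1 : ℤ) ^ n * ∑ i ∈ range L, (m + 1 : ℤ) ^ i)) := by
  simp only [polyBernoulliB, ← mul_sum]
  rw [sum_comm]
  refine congrArg _ (sum_congr rfl fun m _ => ?_)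
  simp only [mul_sum, pow_add]
  exact sum_congr rfl fun i _ => by ring

theorem polyBernoulliB_sum_period_upper_general (p : ℕ) (hp : p.Prime) (k N : ℕ)
    (hk : 0 < k) (n : ℕ) (hn : N ≤ n) :
    (∑ i ∈ Finset.range (p ^ N).totient, polyBernoulliB (n + i) k)
      ≡ 0 [ZMOD ((p : ℤ) ^ N)] := by
  rw [Int.modEq_zero_iff_dvd, sum_polyBernoulliB_upper]
  refine (dvd_sum fun m _ => ?_).mul_left _
  rcases m.eq_zero_or_pos with rfl | hm
  · obtain ⟨k, rfl⟩ := Nat.exists_eq_succ_of_ne_zero hk.ne'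
    simp [stirling2]
  · exact (prime_pow_dvd_factorial_mul_pow_mul_geom_sum hp hn hm).mul_left _

theorem polyBernoulliB_sum_period_upper (p : ℕ) (hp : p.Prime) (k N : ℕ)
    (hk : 0 < k) (hN : 0 < N) (n : ℕ) (hn : N ≤ n) :
    (∑ i ∈ Finset.range (p ^ N).totient, polyBernoulliB (n + i) k)
      ≡ 0 [ZMOD ((p : ℤ) ^ N)] :=
  polyBernoulliB_sum_period_upper_general p hp k N hk n hn
end
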